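/- arXiv:2308.16167 — 2 statements merged into one kernel-verified Lean document; each statement's English description precedes it below -/
import Mathlib

section
/- Let H : ℝ^d × ℝ^d → ℝ be C¹ and displacement monotone in the measure-free sense: for all x₁, x₂, p₁, p₂ ∈ ℝ^d, ⟨−∂_xH(x₁,p₁) + ∂_xH(x₂,p₂), x₁ − x₂⟩ + ⟨∂_pH(x₁,p₁) − ∂_pH(x₂,p₂), p₁ − p₂⟩ ≥ 0. Let G : ℝ^d → ℝ be C¹ with monotone gradient: ⟨∇G(a) − ∇G(b), a − b⟩ ≥ 0 for all a, b. Let x₁, x₂, p₁, p₂ : [t₀, T] → ℝ^d be C¹ curves satisfying ẋᵢ = −∂_pH(xᵢ, pᵢ), ṗᵢ = ∂_xH(xᵢ, pᵢ), with the terminal condition pᵢ(T) = ∇G(xᵢ(T)) for i = 1, 2. Then ⟨p₁(t) − p₂(t), x₁(t) − x₂(t)⟩ ≥ 0 for every t ∈ [t₀, T]. -/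
open scoped RealInnerProductSpace

/-- Partial gradient of `H(x,p)` in the `x` variable. -/
noncomputable def gradX {d : ℕ}
    (H : EuclideanSpace ℝ (Fin d) × EuclideanSpace ℝ (Fin d) → ℝ)
    (x p : EuclideanSpace ℝ (Fin d)) : EuclideanSpace ℝ (Fin d) :=
  gradient (fun y => H (y, p)) x

/-- Partial gradient of `H(x,p)` in the `p` variable. -/
noncomputable def gradP {d : ℕ}
    (H : EuclideanSpace ℝ (Fin d) × EuclideanSpace ℝ (Fin d) → ℝ)
    (x p : EuclideanSpace ℝ (Fin d)) : EuclideanSpace ℝ (Fin d) :=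
  gradient (fun q => H (x, q)) p

/-- Propagation of displacement monotonicity along the deterministic
forward-backward Hamiltonian system: the pairing of the momentum difference
with the state difference is nonnegative at all times. -/
theorem pairing_nonneg_of_displacement_monotone {d : ℕ}
    (H : EuclideanSpace ℝ (Fin d) × EuclideanSpace ℝ (Fin d) → ℝ)
    (hH : ContDiff ℝ 1 H)
    (hHmono : ∀ x₁ x₂ p₁ p₂ : EuclideanSpace ℝ (Fin d),
      0 ≤ ⟪-gradX H x₁ p₁ + gradX H x₂ p₂, x₁ - x₂⟫
          + ⟪gradP H x₁ p₁ - gradP H x₂ p₂, p₁ - p₂⟫)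
    (G : EuclideanSpace ℝ (Fin d) → ℝ) (hG : ContDiff ℝ 1 G)
    (hGmono : ∀ a b : EuclideanSpace ℝ (Fin d),
      0 ≤ ⟪gradient G a - gradient G b, a - b⟫)
    (t₀ T : ℝ) (ht : t₀ ≤ T)
    (x₁ x₂ p₁ p₂ : ℝ → EuclideanSpace ℝ (Fin d))
    (hx₁ : ∀ t ∈ Set.Icc t₀ T, HasDerivAt x₁ (-(gradP H (x₁ t) (p₁ t))) t)
    (hx₂ : ∀ t ∈ Set.Icc t₀ T, HasDerivAt x₂ (-(gradP H (x₂ t) (p₂ t))) t)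
    (hp₁ : ∀ t ∈ Set.Icc t₀ T, HasDerivAt p₁ (gradX H (x₁ t) (p₁ t)) t)
    (hp₂ : ∀ t ∈ Set.Icc t₀ T, HasDerivAt p₂ (gradX H (x₂ t) (p₂ t)) t)
    (hT₁ : p₁ T = gradient G (x₁ T)) (hT₂ : p₂ T = gradient G (x₂ T)) :
    ∀ t ∈ Set.Icc t₀ T, 0 ≤ ⟪p₁ t - p₂ t, x₁ t - x₂ t⟫ := by
  set f : ℝ → ℝ := fun t => ⟪p₁ t - p₂ t, x₁ t - x₂ t⟫ with hf
  have hderiv : ∀ t ∈ Set.Icc t₀ T, HasDerivAt f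
      (⟪p₁ t - p₂ t, -(gradP H (x₁ t) (p₁ t)) - -(gradP H (x₂ t) (p₂ t))⟫
        + ⟪gradX H (x₁ t) (p₁ t) - gradX H (x₂ t) (p₂ t), x₁ t - x₂ t⟫) t := by
    intro t htt
    exact ((hp₁ t htt).sub (hp₂ t htt)).inner ℝ ((hx₁ t htt).sub (hx₂ t htt))
  have hnonpos : ∀ t ∈ Set.Icc t₀ T,
      (⟪p₁ t - p₂ t, -(gradP H (x₁ t) (p₁ t)) - -(gradP H (x₂ t) (p₂ t))⟫
        + ⟪gradX H (x₁ t) (p₁ t) - gradX H (x₂ t) (p₂ t), x₁ t - x₂ t⟫ : ℝ) ≤ 0 := by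
    intro t htt
    have h := hHmono (x₁ t) (x₂ t) (p₁ t) (p₂ t)
    have e1 : (⟪p₁ t - p₂ t, -(gradP H (x₁ t) (p₁ t)) - -(gradP H (x₂ t) (p₂ t))⟫ : ℝ)
        = -⟪gradP H (x₁ t) (p₁ t) - gradP H (x₂ t) (p₂ t), p₁ t - p₂ t⟫ := by
      rw [real_inner_comm]
      rw [show -(gradP H (x₁ t) (p₁ t)) - -(gradP H (x₂ t) (p₂ t))
          = -(gradP H (x₁ t) (p₁ t) - gradP H (x₂ t) (p₂ t)) by abel]
      rw [inner_neg_left]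
    have e2 : (⟪gradX H (x₁ t) (p₁ t) - gradX H (x₂ t) (p₂ t), x₁ t - x₂ t⟫ : ℝ)
        = -⟪-gradX H (x₁ t) (p₁ t) + gradX H (x₂ t) (p₂ t), x₁ t - x₂ t⟫ := by
      rw [show -gradX H (x₁ t) (p₁ t) + gradX H (x₂ t) (p₂ t)
          = -(gradX H (x₁ t) (p₁ t) - gradX H (x₂ t) (p₂ t)) by abel]
      rw [inner_neg_left]; ring
    rw [e1, e2]; linarith
  have hanti : AntitoneOn f (Set.Icc t₀ T) := by
    apply antitoneOn_of_deriv_nonpos (convex_Icc t₀ T)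
    · exact fun t htt => (hderiv t htt).continuousAt.continuousWithinAt
    · intro t htt
      rw [interior_Icc] at htt
      exact (hderiv t (Set.mem_Icc_of_Ioo htt)).differentiableAt.differentiableWithinAt
    · intro t htt
      rw [interior_Icc] at htt
      rw [(hderiv t (Set.mem_Icc_of_Ioo htt)).deriv]
      exact hnonpos t (Set.mem_Icc_of_Ioo htt)
  intro t htt
  have hfT : 0 ≤ f T := by
    simp only [hf, hT₁, hT₂]
    exact hGmono (x₁ T) (x₂ T)
  have := hanti htt (Set.right_mem_Icc.2 ht) htt.2
  linarith
end

section
/- Let ξ₁, ξ₂ ∈ ℝ^d and let A, B, C, D : [t₀,T] → ℝ^{d×d} and P ∈ ℝ^{d×d} be bounded measurable coefficient matrices with sup norms at most M. Consider the linear forward-backward system of integral equations for continuous functions x, y : [t₀,T] → ℝ^d: x(t) = ξ₁ − ∫_{t₀}^t (A(s)x(s) + B(s)y(s)) ds and y(t) = P x(T) + ∫_t^T (C(s)x(s) + D(s)y(s)) ds. There exists δ > 0, depending only on M and ‖P‖, such that if T − t₀ < δ then this system admits a unique pair of continuous solutions (x, y). -/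
open MeasureTheory

set_option maxHeartbeats 1600000

namespace FBSDEAux
open Set

variable {d : ℕ}

local notation "E" => EuclideanSpace ℝ (Fin d)

lemma meas_apply {A : ℝ → (E →L[ℝ] E)} (hA : Measurable A) {u : ℝ → E} (hu : Continuous u) :
    Measurable fun s => A s (u s) :=
  (isBoundedBilinearMap_apply.continuous.measurable).comp (hA.prodMk hu.measurable)

lemma intInt {A B : ℝ → (E →L[ℝ] E)} (hA : Measurable A) (hB : Measurable B)
    {u v : ℝ → E} (hu : Continuous u) (hv : Continuous v)
    {M Cu : ℝ} (hMA : ∀ s, ‖A s‖ ≤ M) (hMB : ∀ s, ‖B s‖ ≤ M)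
    (hbu : ∀ s, ‖u s‖ ≤ Cu) (hbv : ∀ s, ‖v s‖ ≤ Cu) (a b : ℝ) :
    IntervalIntegrable (fun s => A s (u s) + B s (v s)) volume a b := by
  have hM0 : 0 ≤ M := le_trans (norm_nonneg _) (hMA 0)
  have hmeas : Measurable fun s => A s (u s) + B s (v s) :=
    (meas_apply hA hu).add (meas_apply hB hv)
  refine (intervalIntegrable_const (c := M*Cu + M*Cu)).mono_fun' hmeas.aestronglyMeasurable ?_
  filter_upwards with s
  calc ‖A s (u s) + B s (v s)‖ ≤ ‖A s (u s)‖ + ‖B s (v s)‖ := norm_add_le _ _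
    _ ≤ M*Cu + M*Cu := add_le_add
        (le_trans ((A s).le_opNorm _) (mul_le_mul (hMA s) (hbu s) (norm_nonneg _) hM0))
        (le_trans ((B s).le_opNorm _) (mul_le_mul (hMB s) (hbv s) (norm_nonneg _) hM0))

lemma norm_int_sub_le {A B : ℝ → (E →L[ℝ] E)} (hA : Measurable A) (hB : Measurable B)
    {u v u' v' : ℝ → E} (hu : Continuous u) (hv : Continuous v)
    (hu' : Continuous u') (hv' : Continuous v')
    {M Cu Cu' Dd : ℝ} (hMA : ∀ s, ‖A s‖ ≤ M) (hMB : ∀ s, ‖B s‖ ≤ M)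
    (hbu : ∀ s, ‖u s‖ ≤ Cu) (hbv : ∀ s, ‖v s‖ ≤ Cu)
    (hbu' : ∀ s, ‖u' s‖ ≤ Cu') (hbv' : ∀ s, ‖v' s‖ ≤ Cu')
    (hdu : ∀ s, ‖u s - u' s‖ ≤ Dd) (hdv : ∀ s, ‖v s - v' s‖ ≤ Dd) (a b : ℝ) :
    ‖(∫ s in a..b, (A s (u s) + B s (v s))) - ∫ s in a..b, (A s (u' s) + B s (v' s))‖
      ≤ (M*Dd + M*Dd) * |b - a| := by
  have hM0 : 0 ≤ M := le_trans (norm_nonneg _) (hMA 0)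
  rw [← intervalIntegral.integral_sub (intInt hA hB hu hv hMA hMB hbu hbv a b)
        (intInt hA hB hu' hv' hMA hMB hbu' hbv' a b)]
  refine intervalIntegral.norm_integral_le_of_norm_le_const fun s _ => ?_
  have heq : A s (u s) + B s (v s) - (A s (u' s) + B s (v' s))
      = A s (u s - u' s) + B s (v s - v' s) := by
    simp only [map_sub]; abel
  rw [heq]
  calc ‖A s (u s - u' s) + B s (v s - v' s)‖
      ≤ ‖A s (u s - u' s)‖ + ‖B s (v s - v' s)‖ := norm_add_le _ _
    _ ≤ M*Dd + M*Dd := add_le_add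
        (le_trans ((A s).le_opNorm _) (mul_le_mul (hMA s) (hdu s) (norm_nonneg _) hM0))
        (le_trans ((B s).le_opNorm _) (mul_le_mul (hMB s) (hdv s) (norm_nonneg _) hM0))

variable (t₀ T : ℝ)

noncomputable def XX (hle : t₀ ≤ T) (f : C(Icc t₀ T, E × E)) : ℝ → E :=
  fun s => (IccExtend hle f s).1

noncomputable def YY (hle : t₀ ≤ T) (f : C(Icc t₀ T, E × E)) : ℝ → E :=
  fun s => (IccExtend hle f s).2

lemma XXc (hle : t₀ ≤ T) (f : C(Icc t₀ T, E × E)) : Continuous (XX t₀ T hle f) :=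
  continuous_fst.comp (f.continuous.comp continuous_projIcc)

lemma YYc (hle : t₀ ≤ T) (f : C(Icc t₀ T, E × E)) : Continuous (YY t₀ T hle f) :=
  continuous_snd.comp (f.continuous.comp continuous_projIcc)

lemma XXb (hle : t₀ ≤ T) (f : C(Icc t₀ T, E × E)) (s : ℝ) : ‖XX t₀ T hle f s‖ ≤ ‖f‖ :=
  le_trans (norm_fst_le _) (f.norm_coe_le_norm _)

lemma YYb (hle : t₀ ≤ T) (f : C(Icc t₀ T, E × E)) (s : ℝ) : ‖YY t₀ T hle f s‖ ≤ ‖f‖ :=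
  le_trans (norm_snd_le _) (f.norm_coe_le_norm _)

lemma XXd (hle : t₀ ≤ T) (f g : C(Icc t₀ T, E × E)) (s : ℝ) :
    ‖XX t₀ T hle f s - XX t₀ T hle g s‖ ≤ dist f g := by
  calc ‖XX t₀ T hle f s - XX t₀ T hle g s‖
      = dist (IccExtend hle f s).1 (IccExtend hle g s).1 := (dist_eq_norm _ _).symm
    _ ≤ dist (IccExtend hle (⇑f) s) (IccExtend hle (⇑g) s) := by
        rw [Prod.dist_eq]; exact le_max_left _ _
    _ ≤ dist f g := ContinuousMap.dist_apply_le_dist _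

lemma YYd (hle : t₀ ≤ T) (f g : C(Icc t₀ T, E × E)) (s : ℝ) :
    ‖YY t₀ T hle f s - YY t₀ T hle g s‖ ≤ dist f g := by
  calc ‖YY t₀ T hle f s - YY t₀ T hle g s‖
      = dist (IccExtend hle f s).2 (IccExtend hle g s).2 := (dist_eq_norm _ _).symm
    _ ≤ dist (IccExtend hle (⇑f) s) (IccExtend hle (⇑g) s) := by
        rw [Prod.dist_eq]; exact le_max_right _ _
    _ ≤ dist f g := ContinuousMap.dist_apply_le_dist _

lemma XXmem (hle : t₀ ≤ T) (f : C(Icc t₀ T, E × E)) {s : ℝ} (hs : s ∈ Icc t₀ T) :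
    XX t₀ T hle f s = (f ⟨s, hs⟩).1 :=
  congrArg Prod.fst (IccExtend_of_mem hle (⇑f) hs)

lemma YYmem (hle : t₀ ≤ T) (f : C(Icc t₀ T, E × E)) {s : ℝ} (hs : s ∈ Icc t₀ T) :
    YY t₀ T hle f s = (f ⟨s, hs⟩).2 :=
  congrArg Prod.snd (IccExtend_of_mem hle (⇑f) hs)

noncomputable def Phi (hle : t₀ ≤ T) (ξ₁ : E) (A B C D : ℝ → (E →L[ℝ] E)) (P : E →L[ℝ] E)
    (hc : ∀ f : C(Icc t₀ T, E × E), Continuous fun t : Icc t₀ T =>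
      ((ξ₁ - ∫ s in t₀..(t : ℝ), (A s (XX t₀ T hle f s) + B s (YY t₀ T hle f s)),
        P (XX t₀ T hle f T) + ∫ s in (t : ℝ)..T,
          (C s (XX t₀ T hle f s) + D s (YY t₀ T hle f s))) : E × E))
    (f : C(Icc t₀ T, E × E)) : C(Icc t₀ T, E × E) :=
  ⟨_, hc f⟩

lemma key (M MP : ℝ) (hM : 0 ≤ M) (hMP : 0 ≤ MP)
    (t₀ T : ℝ) (hle : t₀ ≤ T) (hsmall : 2*M*(T - t₀) * (2*(MP+1)) ≤ 1)
    (ξ₁ : E) (A B C D : ℝ → (E →L[ℝ] E)) (P : E →L[ℝ] E)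
    (mA : Measurable A) (mB : Measurable B) (mC : Measurable C) (mD : Measurable D)
    (hA : ∀ s, ‖A s‖ ≤ M) (hB : ∀ s, ‖B s‖ ≤ M) (hC : ∀ s, ‖C s‖ ≤ M) (hD : ∀ s, ‖D s‖ ≤ M)
    (hP : ‖P‖ ≤ MP) :
    ∃ x y : ℝ → E,
      ContinuousOn x (Set.Icc t₀ T) ∧ ContinuousOn y (Set.Icc t₀ T) ∧
      (∀ t ∈ Set.Icc t₀ T,
        x t = ξ₁ - ∫ s in t₀..t, (A s (x s) + B s (y s))) ∧
      (∀ t ∈ Set.Icc t₀ T,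
        y t = P (x T) + ∫ s in t..T, (C s (x s) + D s (y s))) ∧
      ∀ x' y' : ℝ → E,
        ContinuousOn x' (Set.Icc t₀ T) → ContinuousOn y' (Set.Icc t₀ T) →
        (∀ t ∈ Set.Icc t₀ T,
          x' t = ξ₁ - ∫ s in t₀..t, (A s (x' s) + B s (y' s))) →
        (∀ t ∈ Set.Icc t₀ T,
          y' t = P (x' T) + ∫ s in t..T, (C s (x' s) + D s (y' s))) →
        ∀ t ∈ Set.Icc t₀ T, x' t = x t ∧ y' t = y t := by
  classical
  haveI : Nonempty (Icc t₀ T) := ⟨⟨t₀, le_refl _, hle⟩⟩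
  have hTmem : T ∈ Icc t₀ T := ⟨hle, le_refl _⟩
  -- integrability of the integrands
  have hFint : ∀ (f : C(Icc t₀ T, E × E)) (a b : ℝ),
      IntervalIntegrable (fun s => A s (XX t₀ T hle f s) + B s (YY t₀ T hle f s)) volume a b :=
    fun f a b => intInt mA mB (XXc t₀ T hle f) (YYc t₀ T hle f) hA hB
      (XXb t₀ T hle f) (YYb t₀ T hle f) a b
  have hGint : ∀ (f : C(Icc t₀ T, E × E)) (a b : ℝ),
      IntervalIntegrable (fun s => C s (XX t₀ T hle f s) + D s (YY t₀ T hle f s)) volume a b :=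
    fun f a b => intInt mC mD (XXc t₀ T hle f) (YYc t₀ T hle f) hC hD
      (XXb t₀ T hle f) (YYb t₀ T hle f) a b
  -- continuity of the Picard map
  have hc : ∀ f : C(Icc t₀ T, E × E), Continuous fun t : Icc t₀ T =>
      ((ξ₁ - ∫ s in t₀..(t : ℝ), (A s (XX t₀ T hle f s) + B s (YY t₀ T hle f s)),
        P (XX t₀ T hle f T) + ∫ s in (t : ℝ)..T,
          (C s (XX t₀ T hle f s) + D s (YY t₀ T hle f s))) : E × E) := by
    intro f
    apply Continuous.prodMk
    · exact (continuous_const.sub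
        (intervalIntegral.continuous_primitive (hFint f) t₀)).comp continuous_subtype_val
    · have h1 : Continuous fun r : ℝ => ∫ s in r..T,
          (C s (XX t₀ T hle f s) + D s (YY t₀ T hle f s)) := by
        refine ((intervalIntegral.continuous_primitive (hGint f) T).neg).congr fun r => ?_
        exact (intervalIntegral.integral_symm T r).symm
      exact (continuous_const.add (h1.comp continuous_subtype_val))
  set Φ : C(Icc t₀ T, E × E) → C(Icc t₀ T, E × E) := Phi t₀ T hle ξ₁ A B C D P hc with hΦdef
  have hΦapp : ∀ (f : C(Icc t₀ T, E × E)) (t : Icc t₀ T),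
      Φ f t = (ξ₁ - ∫ s in t₀..(t : ℝ), (A s (XX t₀ T hle f s) + B s (YY t₀ T hle f s)),
        P (XX t₀ T hle f T) + ∫ s in (t : ℝ)..T,
          (C s (XX t₀ T hle f s) + D s (YY t₀ T hle f s))) := fun f t => rfl
  set L := T - t₀ with hLdef
  have hL0 : 0 ≤ L := sub_nonneg.2 hle
  -- basic integral difference estimates
  have bound1 : ∀ (f g : C(Icc t₀ T, E × E)) (b c : ℝ), b ∈ Icc t₀ T → c ∈ Icc t₀ T →
      ‖(∫ s in b..c, (A s (XX t₀ T hle f s) + B s (YY t₀ T hle f s)))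
        - ∫ s in b..c, (A s (XX t₀ T hle g s) + B s (YY t₀ T hle g s))‖
        ≤ 2*M*L * dist f g := by
    intro f g b c hb hc2
    have h := norm_int_sub_le mA mB (XXc t₀ T hle f) (YYc t₀ T hle f)
      (XXc t₀ T hle g) (YYc t₀ T hle g) hA hB (XXb t₀ T hle f) (YYb t₀ T hle f)
      (XXb t₀ T hle g) (YYb t₀ T hle g) (XXd t₀ T hle f g) (YYd t₀ T hle f g) b c
    refine h.trans ?_
    have habs : |c - b| ≤ L := by
      rw [abs_le]; constructor <;> [linarith [hb.2, hc2.1]; linarith [hb.1, hc2.2]]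
    have hd0 : (0:ℝ) ≤ dist f g := dist_nonneg
    nlinarith [mul_nonneg hM hd0, abs_nonneg (c - b)]
  have bound2 : ∀ (f g : C(Icc t₀ T, E × E)) (b c : ℝ), b ∈ Icc t₀ T → c ∈ Icc t₀ T →
      ‖(∫ s in b..c, (C s (XX t₀ T hle f s) + D s (YY t₀ T hle f s)))
        - ∫ s in b..c, (C s (XX t₀ T hle g s) + D s (YY t₀ T hle g s))‖
        ≤ 2*M*L * dist f g := by
    intro f g b c hb hc2
    have h := norm_int_sub_le mC mD (XXc t₀ T hle f) (YYc t₀ T hle f)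
      (XXc t₀ T hle g) (YYc t₀ T hle g) hC hD (XXb t₀ T hle f) (YYb t₀ T hle f)
      (XXb t₀ T hle g) (YYb t₀ T hle g) (XXd t₀ T hle f g) (YYd t₀ T hle f g) b c
    refine h.trans ?_
    have habs : |c - b| ≤ L := by
      rw [abs_le]; constructor <;> [linarith [hb.2, hc2.1]; linarith [hb.1, hc2.2]]
    have hd0 : (0:ℝ) ≤ dist f g := dist_nonneg
    nlinarith [mul_nonneg hM hd0, abs_nonneg (c - b)]
  -- componentwise Lipschitz estimates for Φ
  have E1 : ∀ (f g : C(Icc t₀ T, E × E)) (t : Icc t₀ T),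
      ‖(Φ f t).1 - (Φ g t).1‖ ≤ 2*M*L * dist f g := by
    intro f g t
    rw [hΦapp, hΦapp]
    simp only
    rw [sub_sub_sub_cancel_left]
    rw [norm_sub_rev]
    exact bound1 f g t₀ (t : ℝ) ⟨le_refl _, hle⟩ t.2
  have E2 : ∀ (f g : C(Icc t₀ T, E × E)) (t : Icc t₀ T),
      ‖(Φ f t).2 - (Φ g t).2‖
        ≤ MP * ‖XX t₀ T hle f T - XX t₀ T hle g T‖ + 2*M*L * dist f g := by
    intro f g t
    rw [hΦapp, hΦapp]
    simp only
    rw [add_sub_add_comm, ← map_sub]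
    refine (norm_add_le _ _).trans (add_le_add ?_ ?_)
    · exact le_trans (P.le_opNorm _) (mul_le_mul_of_nonneg_right hP (norm_nonneg _))
    · exact bound2 f g (t : ℝ) T t.2 hTmem
  have distΦ : ∀ f g : C(Icc t₀ T, E × E),
      dist (Φ f) (Φ g) ≤ (MP + 2*M*L) * dist f g := by
    intro f g
    have hnn : 0 ≤ (MP + 2*M*L) * dist f g := by positivity
    rw [ContinuousMap.dist_le hnn]
    intro t
    rw [Prod.dist_eq]
    refine max_le ?_ ?_
    · rw [dist_eq_norm]
      refine (E1 f g t).trans ?_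
      nlinarith [dist_nonneg (x := f) (y := g)]
    · rw [dist_eq_norm]
      refine (E2 f g t).trans ?_
      have := XXd t₀ T hle f g T
      nlinarith [dist_nonneg (x := f) (y := g), norm_nonneg (XX t₀ T hle f T - XX t₀ T hle g T)]
  -- the squared map is a contraction
  have hΦ2 : ∀ f g : C(Icc t₀ T, E × E),
      dist (Φ (Φ f)) (Φ (Φ g)) ≤ (2*M*L*MP + 2*M*L*(MP + 2*M*L)) * dist f g := by
    intro f g
    have hnn : 0 ≤ (2*M*L*MP + 2*M*L*(MP + 2*M*L)) * dist f g := by positivity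
    rw [ContinuousMap.dist_le hnn]
    intro t
    have hd0 : (0:ℝ) ≤ dist f g := dist_nonneg
    have hdΦ := distΦ f g
    rw [Prod.dist_eq]
    refine max_le ?_ ?_
    · rw [dist_eq_norm]
      refine (E1 (Φ f) (Φ g) t).trans ?_
      have h2 : 2*M*L * dist (Φ f) (Φ g) ≤ 2*M*L * ((MP + 2*M*L) * dist f g) :=
        mul_le_mul_of_nonneg_left hdΦ (by positivity)
      nlinarith [mul_nonneg (mul_nonneg (mul_nonneg hM hL0) hMP) hd0]
    · rw [dist_eq_norm]
      refine (E2 (Φ f) (Φ g) t).trans ?_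
      have hXT : ‖XX t₀ T hle (Φ f) T - XX t₀ T hle (Φ g) T‖ ≤ 2*M*L * dist f g := by
        rw [XXmem t₀ T hle (Φ f) hTmem, XXmem t₀ T hle (Φ g) hTmem]
        exact E1 f g ⟨T, hTmem⟩
      have h2 : 2*M*L * dist (Φ f) (Φ g) ≤ 2*M*L * ((MP + 2*M*L) * dist f g) :=
        mul_le_mul_of_nonneg_left hdΦ (by positivity)
      have h1 : MP * ‖XX t₀ T hle (Φ f) T - XX t₀ T hle (Φ g) T‖ ≤ MP * (2*M*L * dist f g) :=
        mul_le_mul_of_nonneg_left hXT hMP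
      nlinarith
  -- contraction constant
  set κ : ℝ := (2*MP+1)/(2*MP+2) with hκdef
  have hden : (0:ℝ) < 2*MP+2 := by linarith
  have hκ0 : 0 ≤ κ := by positivity
  have hκ1 : κ < 1 := by rw [div_lt_one hden]; linarith
  have hcκ : 2*M*L*MP + 2*M*L*(MP + 2*M*L) ≤ κ := by
    rw [le_div_iff₀ hden]
    have hu : 2*M*L*(2*(MP+1)) ≤ 1 := hsmall
    have hu0 : 0 ≤ 2*M*L := by positivity
    nlinarith [mul_nonneg hu0 hMP, mul_nonneg hu0 hu0, mul_nonneg (mul_nonneg hu0 hu0) hMP]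
  have hlip : LipschitzWith (Real.toNNReal κ) (Φ ∘ Φ) := by
    refine LipschitzWith.of_dist_le_mul fun f g => ?_
    rw [Real.coe_toNNReal _ hκ0]
    calc dist ((Φ ∘ Φ) f) ((Φ ∘ Φ) g) ≤ (2*M*L*MP + 2*M*L*(MP + 2*M*L)) * dist f g := hΦ2 f g
      _ ≤ κ * dist f g := mul_le_mul_of_nonneg_right hcκ dist_nonneg
  have hcontr : ContractingWith (Real.toNNReal κ) (Φ ∘ Φ) :=
    ⟨Real.toNNReal_lt_one.2 hκ1, hlip⟩
  haveI : Nonempty C(Icc t₀ T, E × E) := ⟨ContinuousMap.const _ 0⟩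
  set g₀ : C(Icc t₀ T, E × E) := ContractingWith.fixedPoint (Φ ∘ Φ) hcontr with hg₀def
  have hfix2 : (Φ ∘ Φ) g₀ = g₀ := hcontr.fixedPoint_isFixedPt
  have hfix : Φ g₀ = g₀ := by
    have h1 : Function.IsFixedPt (Φ ∘ Φ) (Φ g₀) := by
      show Φ (Φ (Φ g₀)) = Φ g₀
      exact congrArg Φ hfix2
    exact hcontr.fixedPoint_unique h1
  -- the solution
  refine ⟨XX t₀ T hle g₀, YY t₀ T hle g₀, (XXc t₀ T hle g₀).continuousOn,
    (YYc t₀ T hle g₀).continuousOn, ?_, ?_, ?_⟩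
  · intro t ht
    have h := congrArg Prod.fst (ContinuousMap.congr_fun hfix ⟨t, ht⟩)
    rw [hΦapp] at h
    rw [XXmem t₀ T hle g₀ ht]
    exact h.symm
  · intro t ht
    have h := congrArg Prod.snd (ContinuousMap.congr_fun hfix ⟨t, ht⟩)
    rw [hΦapp] at h
    rw [YYmem t₀ T hle g₀ ht]
    exact h.symm
  · intro x' y' hx'c hy'c hx'eq hy'eq t ht
    set f' : C(Icc t₀ T, E × E) :=
      ⟨fun t => (x' (t : ℝ), y' (t : ℝ)), (hx'c.restrict).prodMk (hy'c.restrict)⟩ with hf'def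
    have hXf' : ∀ (s : ℝ) (hs : s ∈ Icc t₀ T), XX t₀ T hle f' s = x' s := fun s hs =>
      congrArg Prod.fst (IccExtend_of_mem hle (⇑f') hs)
    have hYf' : ∀ (s : ℝ) (hs : s ∈ Icc t₀ T), YY t₀ T hle f' s = y' s := fun s hs =>
      congrArg Prod.snd (IccExtend_of_mem hle (⇑f') hs)
    have hfix' : Φ f' = f' := by
      refine ContinuousMap.ext fun u => ?_
      rw [hΦapp]
      refine Prod.ext ?_ ?_
      · show ξ₁ - ∫ s in t₀..(u : ℝ), (A s (XX t₀ T hle f' s) + B s (YY t₀ T hle f' s)) = x' u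
        rw [hx'eq u u.2]
        congr 1
        refine intervalIntegral.integral_congr fun s hs => ?_
        rw [uIcc_of_le u.2.1] at hs
        have hsmem : s ∈ Icc t₀ T := ⟨hs.1, hs.2.trans u.2.2⟩
        rw [hXf' s hsmem, hYf' s hsmem]
      · show P (XX t₀ T hle f' T) + ∫ s in (u : ℝ)..T,
            (C s (XX t₀ T hle f' s) + D s (YY t₀ T hle f' s)) = y' u
        rw [hy'eq u u.2, hXf' T hTmem]
        congr 1
        refine intervalIntegral.integral_congr fun s hs => ?_
        rw [uIcc_of_le u.2.2] at hs
        have hsmem : s ∈ Icc t₀ T := ⟨u.2.1.trans hs.1, hs.2⟩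
        rw [hXf' s hsmem, hYf' s hsmem]
    have hf'g₀ : f' = g₀ := by
      refine hcontr.fixedPoint_unique ?_
      show Φ (Φ f') = f'
      rw [hfix', hfix']
    constructor
    · rw [← hXf' t ht, hf'g₀]
    · rw [← hYf' t ht, hf'g₀]
end FBSDEAux

/-- Short-time well-posedness of a linear forward-backward two-point boundary
value problem: for bounded measurable coefficients of size at most `M` and a
terminal coupling matrix `P` of norm at most `MP`, there is `δ > 0`, depending
only on `M` and `MP`, such that on any interval of length `< δ` the system has a
unique pair of continuous solutions. -/
theorem linear_FBSDE_short_time_wellposed (d : ℕ) (M MP : ℝ) :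
    ∃ δ > 0, ∀ (t₀ T : ℝ), t₀ ≤ T → T - t₀ < δ →
      ∀ (ξ₁ : EuclideanSpace ℝ (Fin d))
        (A B C D : ℝ → (EuclideanSpace ℝ (Fin d) →L[ℝ] EuclideanSpace ℝ (Fin d)))
        (P : EuclideanSpace ℝ (Fin d) →L[ℝ] EuclideanSpace ℝ (Fin d)),
        Measurable A → Measurable B → Measurable C → Measurable D →
        (∀ s, ‖A s‖ ≤ M) → (∀ s, ‖B s‖ ≤ M) → (∀ s, ‖C s‖ ≤ M) → (∀ s, ‖D s‖ ≤ M) →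
        ‖P‖ ≤ MP →
        ∃ x y : ℝ → EuclideanSpace ℝ (Fin d),
          ContinuousOn x (Set.Icc t₀ T) ∧ ContinuousOn y (Set.Icc t₀ T) ∧
          (∀ t ∈ Set.Icc t₀ T,
            x t = ξ₁ - ∫ s in t₀..t, (A s (x s) + B s (y s))) ∧
          (∀ t ∈ Set.Icc t₀ T,
            y t = P (x T) + ∫ s in t..T, (C s (x s) + D s (y s))) ∧
          ∀ x' y' : ℝ → EuclideanSpace ℝ (Fin d),
            ContinuousOn x' (Set.Icc t₀ T) → ContinuousOn y' (Set.Icc t₀ T) →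
            (∀ t ∈ Set.Icc t₀ T,
              x' t = ξ₁ - ∫ s in t₀..t, (A s (x' s) + B s (y' s))) →
            (∀ t ∈ Set.Icc t₀ T,
              y' t = P (x' T) + ∫ s in t..T, (C s (x' s) + D s (y' s))) →
            ∀ t ∈ Set.Icc t₀ T, x' t = x t ∧ y' t = y t := by
  refine ⟨(4*(|M|+1)*(|MP|+1))⁻¹, by positivity, ?_⟩
  intro t₀ T hle hδ ξ₁ A B C D P mA mB mC mD hA hB hC hD hP
  have hM : 0 ≤ M := le_trans (norm_nonneg _) (hA 0)
  have hMP : 0 ≤ MP := le_trans (norm_nonneg _) hP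
  rw [abs_of_nonneg hM, abs_of_nonneg hMP] at hδ
  have h4 : (0:ℝ) < 4*(M+1)*(MP+1) := by positivity
  have h1 : (T - t₀) * (4*(M+1)*(MP+1)) < 1 := by
    rw [inv_eq_one_div, lt_div_iff₀ h4] at hδ
    exact hδ
  have hT0 : (0:ℝ) ≤ T - t₀ := sub_nonneg.2 hle
  have hsmall : 2*M*(T - t₀) * (2*(MP+1)) ≤ 1 := by
    have h5 : (0:ℝ) ≤ 4*(MP+1)*(T - t₀) := by positivity
    nlinarith [h1, h5]
  exact FBSDEAux.key M MP hM hMP t₀ T hle hsmall ξ₁ A B C D P mA mB mC mD hA hB hC hD hP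
end
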